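/- Let T be a nonzero bounded linear operator on a complex Hilbert space, λ ∈ ℂ nonzero, r > 0 with |λ| > r. If ‖T − λI‖ ≤ r, then sqrt(1 − r²/|λ|²) · ‖T‖ ≤ w(T). -/

import Mathlib

/-! If `‖T - λ I‖ ≤ r`, then for a unit vector `x` the vector `T x` lies within `r` of `λ x`, so
expanding `‖T x - λ x‖² ≤ r²` gives `‖T x‖² + |λ|² - r² ≤ 2 |λ| |⟪T x, x⟫|`. By AM-GM the left side
is at least `2 |λ| √(1 - r²/|λ|²) ‖T x‖`, hence `√(1 - r²/|λ|²) ‖T x‖ ≤ |⟪T x, x⟫| ≤ w(T)`, and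
taking the supremum over `x` bounds `‖T‖`. -/

noncomputable def numRadius {H : Type*} [NormedAddCommGroup H] [InnerProductSpace ℂ H]
    (T : H →L[ℂ] H) : ℝ :=
  sSup {r : ℝ | ∃ x : H, ‖x‖ = 1 ∧ r = ‖(inner ℂ (T x) x : ℂ)‖}

open scoped InnerProductSpace

section InnerProduct

variable {𝕜 E : Type*} [RCLike 𝕜] [NormedAddCommGroup E] [InnerProductSpace 𝕜 E]

theorem norm_sq_add_sub_sq_le_of_norm_sub_smul_le {y x : E} {lam : 𝕜} {ρ : ℝ}
    (h : ‖y - lam • x‖ ≤ ρ) :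
    ‖y‖ ^ 2 + ‖lam‖ ^ 2 * ‖x‖ ^ 2 - ρ ^ 2 ≤ 2 * ‖lam‖ * ‖⟪y, x⟫_𝕜‖ := by
  have h_expand : ‖y - lam • x‖ ^ 2 = ‖y‖ ^ 2 - 2 * RCLike.re ⟪y, lam • x⟫_𝕜 + ‖lam • x‖ ^ 2 :=
    norm_sub_sq y (lam • x)
  have h_re : RCLike.re ⟪y, lam • x⟫_𝕜 ≤ ‖lam‖ * ‖⟪y, x⟫_𝕜‖ := by
    rw [inner_smul_right, ← norm_mul]
    exact RCLike.re_le_norm _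
  have h_sq : ‖y - lam • x‖ ^ 2 ≤ ρ ^ 2 := pow_le_pow_left₀ (norm_nonneg _) h 2
  rw [norm_smul, mul_pow] at h_expand
  linarith

theorem sqrt_one_sub_mul_norm_mul_norm_le_norm_inner {y x : E} {lam : 𝕜} {r : ℝ} (hlam : lam ≠ 0)
    (h : ‖y - lam • x‖ ≤ r * ‖x‖) :
    Real.sqrt (1 - r ^ 2 / ‖lam‖ ^ 2) * ‖y‖ * ‖x‖ ≤ ‖⟪y, x⟫_𝕜‖ := by
  set c := Real.sqrt (1 - r ^ 2 / ‖lam‖ ^ 2)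
  have hlam_pos : 0 < ‖lam‖ := norm_pos_iff.mpr hlam
  rcases le_or_gt (1 - r ^ 2 / ‖lam‖ ^ 2) 0 with hneg | hpos
  · simp [c, Real.sqrt_eq_zero'.mpr hneg]
  have hc_sq : c ^ 2 * ‖lam‖ ^ 2 = ‖lam‖ ^ 2 - r ^ 2 := by
    rw [Real.sq_sqrt hpos.le]
    field_simp
  have h_key := norm_sq_add_sub_sq_le_of_norm_sub_smul_le h
  -- AM-GM: `2 (c |λ| ‖x‖) ‖y‖ ≤ ‖y‖² + (c |λ| ‖x‖)²`
  have h_amgm := two_mul_le_add_sq (c * ‖lam‖ * ‖x‖) ‖y‖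
  have h_scaled : ‖lam‖ * (c * ‖y‖ * ‖x‖) ≤ ‖lam‖ * ‖⟪y, x⟫_𝕜‖ := by
    nlinarith
  exact le_of_mul_le_mul_left h_scaled hlam_pos

end InnerProduct

section NumRadius

variable {H : Type*} [NormedAddCommGroup H] [InnerProductSpace ℂ H]

theorem numRadius_nonneg (T : H →L[ℂ] H) : 0 ≤ numRadius T :=
  Real.sSup_nonneg fun _ ⟨_, _, hr⟩ => hr ▸ norm_nonneg _

theorem norm_inner_le_numRadius (T : H →L[ℂ] H) {x : H} (hx : ‖x‖ = 1) :
    ‖⟪T x, x⟫_ℂ‖ ≤ numRadius T := by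
  refine le_csSup ⟨‖T‖, ?_⟩ ⟨x, hx, rfl⟩
  rintro _ ⟨z, hz, rfl⟩
  calc ‖⟪T z, z⟫_ℂ‖ ≤ ‖T z‖ * ‖z‖ := norm_inner_le_norm _ _
    _ ≤ ‖T‖ * ‖z‖ * ‖z‖ := by gcongr; exact T.le_opNorm z
    _ = ‖T‖ := by rw [hz, mul_one, mul_one]

end NumRadius

theorem stmt_8_general {H : Type*} [NormedAddCommGroup H] [InnerProductSpace ℂ H]
    (T : H →L[ℂ] H) (lam : ℂ) (hlam : lam ≠ 0) (r : ℝ)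
    (h : ‖T - lam • (1 : H →L[ℂ] H)‖ ≤ r) :
    Real.sqrt (1 - r ^ 2 / ‖lam‖ ^ 2) * ‖T‖ ≤ numRadius T := by
  set c := Real.sqrt (1 - r ^ 2 / ‖lam‖ ^ 2)
  have hc : 0 ≤ c := Real.sqrt_nonneg _
  have h_unit : ∀ x : H, ‖x‖ = 1 → ‖((c : ℂ) • T) x‖ ≤ numRadius T := by
    intro x hx
    have h_near : ‖T x - lam • x‖ ≤ r * ‖x‖ :=
      calc ‖T x - lam • x‖ = ‖(T - lam • 1) x‖ := by simp
        _ ≤ ‖T - lam • 1‖ * ‖x‖ := (T - lam • 1).le_opNorm x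
        _ ≤ r * ‖x‖ := by gcongr
    have h_inner := sqrt_one_sub_mul_norm_mul_norm_le_norm_inner hlam h_near
    rw [hx, mul_one] at h_inner
    rw [smul_apply, norm_smul, Complex.norm_real, Real.norm_of_nonneg hc]
    exact h_inner.trans (norm_inner_le_numRadius T hx)
  have h_norm := ContinuousLinearMap.opNorm_le_of_unit_norm (numRadius_nonneg T) h_unit
  rwa [norm_smul, Complex.norm_real, Real.norm_of_nonneg hc] at h_norm

theorem stmt_8 {H : Type*} [NormedAddCommGroup H] [InnerProductSpace ℂ H] [CompleteSpace H]
    (T : H →L[ℂ] H) (hT : T ≠ 0) (lam : ℂ) (hlam : lam ≠ 0) (r : ℝ) (hr : 0 < r)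
    (hlr : r < ‖lam‖) (h : ‖T - lam • (1 : H →L[ℂ] H)‖ ≤ r) :
    Real.sqrt (1 - r ^ 2 / ‖lam‖ ^ 2) * ‖T‖ ≤ numRadius T :=
  stmt_8_general T lam hlam r h
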